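/- Let Γ(t), 0 ≤ t ≤ T, be a sufficiently smooth moving boundary in ℝ², σ a continuous density on the space-time boundary Γ_T, and δ > 0. Then for t ≥ δ and all x ∈ ℝ², the history part of the single layer heat potential satisfies S_H[σ](x, t+δ) := ∫₀^{t} ∫_{Γ(τ)} G(x−y, t+δ−τ) σ(y,τ) ds_y dτ = ∫_{ℝ²} G(x−y, δ) S[σ](y, t) dy; that is, the history part at time t+δ is the Gaussian convolution (with variance parameter δ) of the full single layer potential at time t. -/

import Mathlib

noncomputable section

open MeasureTheory Filter Topology

/-- The plane `ℝ²`. -/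
abbrev E2 : Type := EuclideanSpace ℝ (Fin 2)

/-- The free-space heat kernel in two space dimensions,
`G(x,t) = e^{−‖x‖²/(4t)}/(4πt)`. -/
def heatKernel (x : E2) (t : ℝ) : ℝ :=
  Real.exp (-‖x‖ ^ 2 / (4 * t)) / (4 * Real.pi * t)

/-- A *sufficiently smooth moving boundary* in the plane: for every time `t`,
`Γ(t) = frontier (Ω t)` is the boundary of a bounded open domain `Ω t`; it is a
closed `C²` curve (hence with continuous curvature), parametrized by arc length
by `γ t : ℝ → ℝ²` (periodic with period the length of the curve), jointly
continuous in space-time and evolving with a continuous velocity, with outward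
unit normal `ν t y` at `y ∈ Γ(t)`. -/
structure SmoothMovingBoundary where
  /-- the moving domain -/
  Ω : ℝ → Set E2
  /-- arc-length parametrization of `Γ(t) = frontier (Ω t)` -/
  γ : ℝ → ℝ → E2
  /-- the length of the curve `Γ(t)` -/
  len : ℝ → ℝ
  /-- outward unit normal to `Γ(t)` -/
  ν : ℝ → E2 → E2
  isOpen : ∀ t, IsOpen (Ω t)
  bounded : ∀ t, Bornology.IsBounded (Ω t)
  len_pos : ∀ t, 0 < len t
  len_cont : Continuous len
  periodic : ∀ t s, γ t (s + len t) = γ t s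
  image_eq : ∀ t, frontier (Ω t) = Set.range (γ t)
  contDiff_space : ∀ t, ContDiff ℝ 2 (γ t)
  arclength : ∀ t s, ‖deriv (γ t) s‖ = 1
  joint_cont : Continuous (Function.uncurry γ)
  velocity_cont : Continuous fun p : ℝ × ℝ => deriv (fun u => γ u p.2) p.1
  normal_unit : ∀ t s, ‖ν t (γ t s)‖ = 1
  normal_orth : ∀ t s, inner ℝ (ν t (γ t s)) (deriv (γ t) s) = (0 : ℝ)
  normal_outward : ∀ t s, ∀ᶠ ε in 𝓝[>] (0 : ℝ),
    γ t s + ε • ν t (γ t s) ∉ closure (Ω t)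

namespace SmoothMovingBoundary

/-- The line integral `∫_{Γ(τ)} f(y) ds_y` with respect to arc length. -/
def curveIntegral (B : SmoothMovingBoundary) (τ : ℝ) (f : E2 → ℝ) : ℝ :=
  ∫ s in Set.Ioc 0 (B.len τ), f (B.γ τ s)

/-- The single layer heat potential
`S[σ](x,t) = ∫₀ᵗ ∫_{Γ(τ)} G(x−y,t−τ) σ(y,τ) ds_y dτ`. -/
def singleLayer (B : SmoothMovingBoundary) (σ : E2 → ℝ → ℝ) (x : E2) (t : ℝ) : ℝ :=
  ∫ τ in Set.Ioc 0 t, B.curveIntegral τ fun y => heatKernel (x - y) (t - τ) * σ y τ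

/-- The space-time boundary `Γ_T = ∏_{0}^{T} Γ(t)` viewed as a subset of `ℝ² × ℝ`. -/
def spaceTimeBoundary (B : SmoothMovingBoundary) (T : ℝ) : Set (E2 × ℝ) :=
  {p | p.2 ∈ Set.Icc 0 T ∧ p.1 ∈ frontier (B.Ω p.2)}

end SmoothMovingBoundary

/-- The kernel `∂/∂ν_y G(x−y,s) = ⟪ν_y, (x−y)/(2s)⟫ G(x−y,s)` of the double
layer heat potential, where `n` is the (outward) unit normal at `y`. -/
def dlKernel (n : E2) (x y : E2) (s : ℝ) : ℝ :=
  ((inner ℝ n (x - y) : ℝ) / (2 * s)) * heatKernel (x - y) s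

/-- The double layer heat potential
`D[μ](x,t) = ∫₀ᵗ ∫_{Γ(τ)} (∂/∂ν_y) G(x−y,t−τ) μ(y,τ) ds_y dτ`. -/
def SmoothMovingBoundary.doubleLayer (B : SmoothMovingBoundary) (μ : E2 → ℝ → ℝ)
    (x : E2) (t : ℝ) : ℝ :=
  ∫ τ in Set.Ioc 0 t, B.curveIntegral τ fun y => dlKernel (B.ν τ y) x y (t - τ) * μ y τ

/-- A density which is continuous on the space-time boundary `Γ_T`. -/
def ContinuousDensity (B : SmoothMovingBoundary) (T : ℝ) (σ : E2 → ℝ → ℝ) : Prop :=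
  ContinuousOn (fun p : E2 × ℝ => σ p.1 p.2) (B.spaceTimeBoundary T)

/-- The Laplacian `Δf(x) = ∑ᵢ ∂²f/∂xᵢ²` of a function on the plane. -/
def laplacian2 (f : E2 → ℝ) (x : E2) : ℝ :=
  ∑ i : Fin 2, fderiv ℝ (fun y => fderiv ℝ f y (EuclideanSpace.single i (1 : ℝ))) x
    (EuclideanSpace.single i (1 : ℝ))

/-- The one-dimensional Hermite functions `h_n(x) = (−1)ⁿ (dⁿ/dxⁿ) e^{−x²}`. -/
def hermiteFun (n : ℕ) (x : ℝ) : ℝ :=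
  (-1 : ℝ) ^ n * (deriv^[n] fun y : ℝ => Real.exp (-y ^ 2)) x

/-- Two-dimensional Hermite functions `h_α(x) = h_{α₁}(x₁) h_{α₂}(x₂)`. -/
def hermiteFun2 (α : ℕ × ℕ) (x : E2) : ℝ :=
  hermiteFun α.1 (x 0) * hermiteFun α.2 (x 1)

/-- The exponential integral of order 3/2, `E_{3/2}(x) = ∫₁^∞ e^{−xt} t^{−3/2} dt`. -/
def expInt32 (x : ℝ) : ℝ :=
  ∫ u in Set.Ioi (1 : ℝ), Real.exp (-x * u) / u ^ ((3 : ℝ) / 2)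

/-- The complementary error function `erfc(x) = (2/√π) ∫ₓ^∞ e^{−t²} dt`. -/
def erfc (x : ℝ) : ℝ :=
  2 / Real.sqrt Real.pi * ∫ u in Set.Ioi x, Real.exp (-u ^ 2)

/-!
The heat kernel is a semigroup: completing the square in each coordinate gives
`∫ G(x−z, δ) G(z−y, s) dz = G(x−y, s+δ)`. Convolving `S[σ](·, t)` with `G(·, δ)` and
exchanging the order of integration therefore replaces every kernel `G(x−y, t−τ)` by
`G(x−y, t+δ−τ)`. Fubini applies because `∫ G(z−y, s) dz = 1`, so the double integral is
bounded by `∫ |σ|`, which is finite as `σ` is continuous on the compact set `Γ_T`.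
-/

open Real

theorem integral_euclideanSpace_fin_two_mul (f g : ℝ → ℝ) :
    ∫ z : EuclideanSpace ℝ (Fin 2), f (z 0) * g (z 1) = (∫ x, f x) * ∫ y, g y := by
  rw [← (EuclideanSpace.volume_preserving_symm_measurableEquiv_toLp (Fin 2)).symm.integral_comp',
    ← integral_prod_mul, ← Measure.volume_eq_prod,
    ← (volume_preserving_finTwoArrow ℝ).integral_comp' (fun p : ℝ × ℝ => f p.1 * g p.2)]
  rfl

theorem integral_exp_neg_sq_div_mul_exp_neg_sq_div {a s : ℝ} (ha : 0 < a) (hs : 0 < s)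
    (p q : ℝ) :
    ∫ z : ℝ, exp (-(p - z) ^ 2 / (4 * a)) * exp (-(z - q) ^ 2 / (4 * s)) =
      √(4 * π * a * s / (a + s)) * exp (-(p - q) ^ 2 / (4 * (a + s))) := by
  set c := (a + s) / (4 * a * s) with hc
  set m := (s * p + a * q) / (a + s) with hm
  have complete_square : ∀ z : ℝ, exp (-(p - z) ^ 2 / (4 * a)) * exp (-(z - q) ^ 2 / (4 * s)) =
      exp (-(p - q) ^ 2 / (4 * (a + s))) * exp (-c * (z - m) ^ 2) := by
    intro z
    rw [← exp_add, ← exp_add, hc, hm]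
    congr 1
    field_simp
    ring
  simp_rw [complete_square]
  rw [integral_const_mul, integral_sub_right_eq_self (fun z => exp (-c * z ^ 2)) m,
    integral_gaussian, mul_comm, hc]
  congr 2
  field_simp

theorem heatKernel_eq_mul (v : E2) (s : ℝ) :
    heatKernel v s =
      (4 * π * s)⁻¹ * (exp (-(v 0) ^ 2 / (4 * s)) * exp (-(v 1) ^ 2 / (4 * s))) := by
  rw [heatKernel, ← exp_add, EuclideanSpace.norm_sq_eq, Fin.sum_univ_two, Real.norm_eq_abs,
    Real.norm_eq_abs, sq_abs, sq_abs, div_eq_inv_mul]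
  ring_nf

theorem integral_heatKernel_mul_heatKernel {a s : ℝ} (ha : 0 < a) (hs : 0 < s) (x y : E2) :
    ∫ z : E2, heatKernel (x - z) a * heatKernel (z - y) s = heatKernel (x - y) (a + s) := by
  have separate : ∀ z : E2, heatKernel (x - z) a * heatKernel (z - y) s =
      ((4 * π * a)⁻¹ * (4 * π * s)⁻¹) *
        ((exp (-(x 0 - z 0) ^ 2 / (4 * a)) * exp (-(z 0 - y 0) ^ 2 / (4 * s))) *
          (exp (-(x 1 - z 1) ^ 2 / (4 * a)) * exp (-(z 1 - y 1) ^ 2 / (4 * s)))) := by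
    intro z
    simp only [heatKernel_eq_mul, PiLp.sub_apply]
    ring
  simp_rw [separate]
  rw [integral_const_mul,
    integral_euclideanSpace_fin_two_mul
      (fun w => exp (-(x 0 - w) ^ 2 / (4 * a)) * exp (-(w - y 0) ^ 2 / (4 * s)))
      (fun w => exp (-(x 1 - w) ^ 2 / (4 * a)) * exp (-(w - y 1) ^ 2 / (4 * s))),
    integral_exp_neg_sq_div_mul_exp_neg_sq_div ha hs,
    integral_exp_neg_sq_div_mul_exp_neg_sq_div ha hs, mul_mul_mul_comm (√_),
    Real.mul_self_sqrt (by positivity), heatKernel_eq_mul]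
  simp only [PiLp.sub_apply]
  field_simp

theorem integral_heatKernel {s : ℝ} (hs : 0 < s) (y : E2) :
    ∫ z : E2, heatKernel (z - y) s = 1 := by
  have gauss : ∫ w : ℝ, exp (-w ^ 2 / (4 * s)) = √(π / (1 / (4 * s))) := by
    rw [← integral_gaussian]
    congr with w
    ring_nf
  rw [integral_sub_right_eq_self (fun z => heatKernel z s) y]
  simp only [heatKernel_eq_mul]
  rw [integral_const_mul, integral_euclideanSpace_fin_two_mul (fun w => exp (-w ^ 2 / (4 * s)))
    (fun w => exp (-w ^ 2 / (4 * s))), gauss, Real.mul_self_sqrt (by positivity)]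
  field_simp

theorem heatKernel_nonneg (v : E2) {s : ℝ} (hs : 0 ≤ s) : 0 ≤ heatKernel v s := by
  unfold heatKernel
  positivity

theorem heatKernel_le_inv (v : E2) {δ s : ℝ} (hδ : 0 < δ) (hδs : δ ≤ s) :
    heatKernel v s ≤ (4 * π * δ)⁻¹ := by
  have hs : 0 < s := hδ.trans_le hδs
  calc heatKernel v s ≤ 1 / (4 * π * s) :=
        div_le_div_of_nonneg_right
          (exp_le_one_iff.2 (by rw [neg_div]; exact neg_nonpos.2 (by positivity)))
          (by positivity)
    _ ≤ (4 * π * δ)⁻¹ := by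
        rw [one_div]
        gcongr

theorem measurable_heatKernel : Measurable (Function.uncurry heatKernel) := by
  unfold Function.uncurry heatKernel
  fun_prop

section Superposition

variable {P : Type*} [MeasurableSpace P] {μ : Measure P}

theorem MeasureTheory.Integrable.heatKernel_mul {v : P → E2} {s w : P → ℝ} {δ : ℝ}
    (hv : Measurable v) (hs : Measurable s) (hw : Integrable w μ) (hδ : 0 < δ)
    (hδs : ∀ᵐ p ∂μ, δ ≤ s p) :
    Integrable (fun p => heatKernel (v p) (s p) * w p) μ := by
  refine hw.bdd_mul (c := (4 * π * δ)⁻¹)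
    (measurable_heatKernel.comp (hv.prodMk hs)).aestronglyMeasurable ?_
  filter_upwards [hδs] with p hp
  rw [Real.norm_of_nonneg (heatKernel_nonneg _ (hδ.le.trans hp))]
  exact heatKernel_le_inv _ hδ hp

variable {y : P → E2} {τ w : P → ℝ} {t : ℝ}

theorem integrable_heatKernel_superposition (hy : Measurable y) (hτ : Measurable τ)
    (hw : Integrable w μ) (hτt : ∀ᵐ p ∂μ, τ p < t) :
    Integrable (fun q : P × E2 => heatKernel (q.2 - y q.1) (t - τ q.1) * w q.1)
      (μ.prod volume) := by
  have hmeas : AEStronglyMeasurable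
      (fun q : P × E2 => heatKernel (q.2 - y q.1) (t - τ q.1) * w q.1) (μ.prod volume) :=
    (measurable_heatKernel.comp ((measurable_snd.sub (hy.comp measurable_fst)).prodMk
      (measurable_const.sub (hτ.comp measurable_fst)))).aestronglyMeasurable.mul
      hw.aestronglyMeasurable.comp_fst
  refine (integrable_prod_iff hmeas).2 ⟨?_, hw.norm.congr ?_⟩
  all_goals filter_upwards [hτt] with p hp
  · have hone := integral_heatKernel (sub_pos.2 hp) (y p)
    exact (Integrable.of_integral_ne_zero (hone ▸ one_ne_zero)).mul_const _
  · simp only [norm_mul, Real.norm_of_nonneg (heatKernel_nonneg _ (sub_pos.2 hp).le)]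
    rw [integral_mul_const, integral_heatKernel (sub_pos.2 hp), one_mul]

theorem integral_heatKernel_superposition [SFinite μ] (hy : Measurable y) (hτ : Measurable τ)
    (hw : Integrable w μ) (hτt : ∀ᵐ p ∂μ, τ p < t) {δ : ℝ} (hδ : 0 < δ) (x : E2) :
    ∫ p, heatKernel (x - y p) (t + δ - τ p) * w p ∂μ =
      ∫ z, heatKernel (x - z) δ * ∫ p, heatKernel (z - y p) (t - τ p) * w p ∂μ := by
  have hint : Integrable (fun q : P × E2 =>
      heatKernel (x - q.2) δ * (heatKernel (q.2 - y q.1) (t - τ q.1) * w q.1)) (μ.prod volume) :=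
    (integrable_heatKernel_superposition hy hτ hw hτt).heatKernel_mul
      (v := fun q : P × E2 => x - q.2) (measurable_const.sub measurable_snd) measurable_const hδ
      (ae_of_all _ fun _ => le_rfl)
  calc ∫ p, heatKernel (x - y p) (t + δ - τ p) * w p ∂μ
      = ∫ p, (∫ z, heatKernel (x - z) δ * (heatKernel (z - y p) (t - τ p) * w p)) ∂μ := by
        refine integral_congr_ae ?_
        filter_upwards [hτt] with p hp
        simp_rw [← mul_assoc]
        rw [integral_mul_const, integral_heatKernel_mul_heatKernel hδ (sub_pos.2 hp)]
        ring_nf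
    _ = ∫ z, ∫ p, heatKernel (x - z) δ * (heatKernel (z - y p) (t - τ p) * w p) ∂μ :=
        integral_integral_swap hint
    _ = ∫ z, heatKernel (x - z) δ * ∫ p, heatKernel (z - y p) (t - τ p) * w p ∂μ := by
        simp_rw [integral_const_mul]

end Superposition

namespace SmoothMovingBoundary

variable (B : SmoothMovingBoundary)

/-- Arc-length coordinates `(τ, s)` of `Γ_T`, one period of `B.γ τ` per time `τ`. -/
def arcDomain : Set (ℝ × ℝ) := {p | p.2 ∈ Set.Ioc 0 (B.len p.1)}

def arcDensity (σ : E2 → ℝ → ℝ) : ℝ × ℝ → ℝ :=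
  B.arcDomain.indicator fun p => σ (B.γ p.1 p.2) p.1

theorem measurableSet_arcDomain : MeasurableSet B.arcDomain :=
  (measurableSet_lt measurable_const measurable_snd).inter
    (measurableSet_le measurable_snd (B.len_cont.measurable.comp measurable_fst))

theorem integrable_arcDensity {T t : ℝ} {σ : E2 → ℝ → ℝ} (hσ : ContinuousDensity B T σ)
    (htT : t ≤ T) :
    Integrable (B.arcDensity σ) ((volume.restrict (Set.Ioc 0 t)).prod volume) := by
  obtain ⟨C, hC⟩ := (isCompact_Icc.image_of_continuousOn
    (B.len_cont.continuousOn (s := Set.Icc 0 T))).bddAbove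
  have hK : IntegrableOn (fun p : ℝ × ℝ => σ (B.γ p.1 p.2) p.1)
      (Set.Icc 0 T ×ˢ Set.Icc 0 C) := by
    refine ContinuousOn.integrableOn_compact (isCompact_Icc.prod isCompact_Icc) ?_
    refine hσ.comp (B.joint_cont.prodMk continuous_fst).continuousOn ?_
    rintro ⟨τ, s⟩ ⟨hτ, -⟩
    exact ⟨hτ, B.image_eq τ ▸ ⟨s, rfl⟩⟩
  have hμ : (volume.restrict (Set.Ioc 0 t)).prod (volume : Measure ℝ) =
      (volume : Measure (ℝ × ℝ)).restrict (Set.Ioc 0 t ×ˢ Set.univ) := by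
    rw [Measure.volume_eq_prod, ← Measure.prod_restrict, Measure.restrict_univ]
  rw [hμ]
  refine (hK.indicator B.measurableSet_arcDomain).of_forall_sdiff_eq_zero
    (measurableSet_Ioc.prod MeasurableSet.univ) ?_
  rintro ⟨τ, s⟩ ⟨⟨hτ, -⟩, hK⟩
  refine Set.indicator_of_notMem (fun hs => hK ⟨⟨hτ.1.le, hτ.2.trans htT⟩, hs.1.le, ?_⟩) _
  exact hs.2.trans (hC ⟨τ, ⟨hτ.1.le, hτ.2.trans htT⟩, rfl⟩)

theorem setIntegral_curveIntegral_eq_integral_prod {t : ℝ} (k : ℝ → E2 → ℝ)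
    (σ : E2 → ℝ → ℝ)
    (hk : Integrable (fun p => k p.1 (B.γ p.1 p.2) * B.arcDensity σ p)
      ((volume.restrict (Set.Ioc 0 t)).prod volume)) :
    ∫ τ in Set.Ioc 0 t, B.curveIntegral τ (fun y => k τ y * σ y τ) =
      ∫ p, k p.1 (B.γ p.1 p.2) * B.arcDensity σ p
        ∂(volume.restrict (Set.Ioc 0 t)).prod volume := by
  rw [integral_prod _ hk]
  congr with τ
  rw [curveIntegral, ← integral_indicator measurableSet_Ioc]
  congr with s
  by_cases hs : s ∈ Set.Ioc 0 (B.len τ)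
  · rw [Set.indicator_of_mem hs, arcDensity,
      Set.indicator_of_mem (show (τ, s) ∈ B.arcDomain from hs)]
  · rw [Set.indicator_of_notMem hs, arcDensity,
      Set.indicator_of_notMem (show (τ, s) ∉ B.arcDomain from hs), mul_zero]

end SmoothMovingBoundary

theorem singleLayer_history_semigroup_general
    (T : ℝ) (B : SmoothMovingBoundary)
    (σ : E2 → ℝ → ℝ) (hσ : ContinuousDensity B T σ)
    (δ t : ℝ) (hδ : 0 < δ) (htT : t ≤ T) :
    ∀ x : E2,
      (∫ τ in Set.Ioc 0 t, B.curveIntegral τ fun y =>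
        heatKernel (x - y) (t + δ - τ) * σ y τ) =
      ∫ z : E2, heatKernel (x - z) δ * B.singleLayer σ z t := by
  intro x
  have hγ : Measurable fun p : ℝ × ℝ => B.γ p.1 p.2 := B.joint_cont.measurable
  have hw := B.integrable_arcDensity hσ htT
  -- `τ = t` must be discarded: there `heatKernel _ (t - τ)` takes the junk value `0`
  have hτt : ∀ᵐ p ∂(volume.restrict (Set.Ioc 0 t)).prod (volume : Measure ℝ), p.1 < t := by
    refine (Measure.quasiMeasurePreserving_fst (μ := volume.restrict (Set.Ioc 0 t))
      (ν := (volume : Measure ℝ))).ae (p := fun τ => τ < t) ?_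
    rw [← Measure.restrict_congr_set Ioo_ae_eq_Ioc]
    exact (ae_restrict_mem measurableSet_Ioo).mono fun τ hτ => hτ.2
  have hLHS : Integrable (fun p : ℝ × ℝ => heatKernel (x - B.γ p.1 p.2) (t + δ - p.1) *
      B.arcDensity σ p) ((volume.restrict (Set.Ioc 0 t)).prod volume) :=
    hw.heatKernel_mul (measurable_const.sub hγ) (measurable_const.sub measurable_fst) hδ
      (hτt.mono fun p hp => by linarith)
  rw [B.setIntegral_curveIntegral_eq_integral_prod _ σ hLHS,
    integral_heatKernel_superposition hγ measurable_fst hw hτt hδ x]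
  refine integral_congr_ae ?_
  filter_upwards [(integrable_heatKernel_superposition hγ measurable_fst hw hτt).prod_left_ae]
    with z hz
  rw [SmoothMovingBoundary.singleLayer, B.setIntegral_curveIntegral_eq_integral_prod _ σ hz]

theorem singleLayer_history_semigroup
    (T : ℝ) (B : SmoothMovingBoundary)
    (σ : E2 → ℝ → ℝ) (hσ : ContinuousDensity B T σ)
    (δ t : ℝ) (hδ : 0 < δ) (ht : δ ≤ t) (htT : t ≤ T) :
    ∀ x : E2,
      (∫ τ in Set.Ioc 0 t, B.curveIntegral τ fun y =>
        heatKernel (x - y) (t + δ - τ) * σ y τ) =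
      ∫ z : E2, heatKernel (x - z) δ * B.singleLayer σ z t :=
  singleLayer_history_semigroup_general T B σ hσ δ t hδ htT

end
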